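/- Fix α > 0 and let S₁ = Σ_{k∈ℤ²} [(2k₁ + 1)² + (2k₂)²]^{−2}. As Δ → 0⁺, the ratio of the SPDE-approximated spectral density to the true aliased Matérn spectral density at frequency (1/(2Δ), 0) in dimension 2 with ν = 1 converges to π⁴/(16 S₁): lim_{Δ→0⁺} M̃_Δ((1/(2Δ), 0); 1, 2) / M_Δ((1/(2Δ), 0); 1, 2) = π⁴/(16 S₁). (Numerically this limit is ≈ 2.69.) -/

import Mathlib

open Real Filter

/-- `S₁ = Σ_{k∈ℤ²} [(2k₁ + 1)² + (2k₂)²]^{-2}`. -/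
noncomputable def S1 : ℝ :=
  ∑' k : ℤ × ℤ, 1 / ((2 * (k.1 : ℝ) + 1) ^ 2 + (2 * (k.2 : ℝ)) ^ 2) ^ 2

/-! Since `1/(2Δ) + k₁/Δ = (2k₁ + 1)/(2Δ)`, each bracket `α² + 4π²|ω + k/Δ|²` at the Nyquist
frequency `ω = (1/(2Δ), 0)` equals `(π²/Δ²) (q_k + α²Δ²/π²)` with `q_k = (2k₁ + 1)² + (2k₂)²`,
so the aliased Matérn density is `4πα² (Δ⁴/π⁴) Σ_k (q_k + α²Δ²/π²)⁻²`. The factors `4πα²Δ⁴` cancel in the ratio, leaving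
`π⁴ / ((4 + α²Δ²)² Σ_k (q_k + α²Δ²/π²)⁻²)`, and the sum tends to `S₁` by dominated convergence
with the summable majorant `q_k⁻²`. -/

open Topology

lemma tendsto_tsum_one_div_add_sq {ι : Type*} {q : ι → ℝ} (hq : ∀ k, 0 < q k)
    (hs : Summable fun k => 1 / q k ^ 2) :
    Tendsto (fun ε => ∑' k, 1 / (q k + ε) ^ 2) (𝓝[≥] 0) (𝓝 (∑' k, 1 / q k ^ 2)) := by
  refine tendsto_tsum_of_dominated_convergence hs (fun k => ?_) ?_
  · have hcont : ContinuousAt (fun ε => 1 / (q k + ε) ^ 2) 0 :=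
      continuousAt_const.div (by fun_prop) (by simpa using (hq k).ne')
    simpa using hcont.tendsto.mono_left nhdsWithin_le_nhds
  · filter_upwards [self_mem_nhdsWithin] with ε (hε : 0 ≤ ε) k
    have := hq k
    rw [norm_of_nonneg (by positivity)]
    exact one_div_le_one_div_of_le (by positivity) (by nlinarith)

namespace SpdeNyquist

/-- The squared norm of `2k + (1, 0)`: the aliases of the Nyquist frequency `(1/(2Δ), 0)`,
scaled by `2Δ`. -/
noncomputable def aliasNormSq (k : ℤ × ℤ) : ℝ :=
  (2 * (k.1 : ℝ) + 1) ^ 2 + (2 * (k.2 : ℝ)) ^ 2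

lemma one_le_two_mul_add_one_sq (m : ℤ) : (1 : ℝ) ≤ (2 * (m : ℝ) + 1) ^ 2 := by
  have hodd : 2 * m + 1 ≠ 0 := by omega
  have : (1 : ℤ) ≤ (2 * m + 1) ^ 2 := by
    rcases hodd.lt_or_gt with h | h <;> nlinarith
  exact_mod_cast this

lemma one_le_aliasNormSq (k : ℤ × ℤ) : 1 ≤ aliasNormSq k := by
  have := one_le_two_mul_add_one_sq k.1
  unfold aliasNormSq
  nlinarith [sq_nonneg (2 * (k.2 : ℝ))]

lemma aliasNormSq_pos (k : ℤ × ℤ) : 0 < aliasNormSq k :=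
  one_pos.trans_le (one_le_aliasNormSq k)

lemma summable_one_div_two_mul_add_one_sq :
    Summable fun m : ℤ => 1 / (2 * (m : ℝ) + 1) ^ 2 := by
  have hinj : Function.Injective fun m : ℤ => 2 * m + 1 := fun a b h => by simp only at h; omega
  refine ((summable_one_div_int_pow.2 one_lt_two).comp_injective hinj).congr fun m => ?_
  simp

lemma summable_one_div_one_add_two_mul_sq :
    Summable fun n : ℤ => 1 / (1 + (2 * (n : ℝ)) ^ 2) := by
  refine (summable_one_div_int_pow.2 one_lt_two).of_norm_bounded_eventually ?_
  filter_upwards [eventually_cofinite_ne 0] with n hn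
  have hn2 : (0 : ℝ) < (n : ℝ) ^ 2 := by positivity
  rw [norm_of_nonneg (by positivity)]
  exact one_div_le_one_div_of_le hn2 (by nlinarith)

lemma summable_one_div_aliasNormSq_sq :
    Summable fun k : ℤ × ℤ => 1 / aliasNormSq k ^ 2 := by
  have hprod : Summable fun k : ℤ × ℤ =>
      1 / (2 * (k.1 : ℝ) + 1) ^ 2 * (1 / (1 + (2 * (k.2 : ℝ)) ^ 2)) :=
    summable_one_div_two_mul_add_one_sq.mul_of_nonneg summable_one_div_one_add_two_mul_sq
      (fun _ => by positivity) (fun _ => by positivity)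
  refine hprod.of_nonneg_of_le (fun _ => by positivity) fun k => ?_
  have hu := one_le_two_mul_add_one_sq k.1
  have hv := sq_nonneg (2 * (k.2 : ℝ))
  -- `q_k ≥ (2k₁+1)²` and, as `(2k₁+1)² ≥ 1`, `q_k ≥ 1 + (2k₂)²`; multiply the two bounds
  rw [one_div_mul_one_div]
  exact one_div_le_one_div_of_le (by positivity) (by unfold aliasNormSq; nlinarith)

lemma S1_pos : 0 < S1 :=
  summable_one_div_aliasNormSq_sq.tsum_pos (fun _ => by positivity) (0, 0)
    (by have := aliasNormSq_pos (0, 0); positivity)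

noncomputable def aliasSum (ε : ℝ) : ℝ :=
  ∑' k : ℤ × ℤ, 1 / (aliasNormSq k + ε) ^ 2

lemma tsum_aliased_matern_nyquist (α : ℝ) {Δ : ℝ} (hΔ : Δ ≠ 0) :
    ∑' k : ℤ × ℤ, 1 / (α ^ 2 + 4 * π ^ 2 * (1 / (2 * Δ) + (k.1 : ℝ) / Δ) ^ 2
        + 4 * π ^ 2 * ((0 : ℝ) + (k.2 : ℝ) / Δ) ^ 2) ^ 2
      = Δ ^ 4 / π ^ 4 * aliasSum (α ^ 2 * Δ ^ 2 / π ^ 2) := by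
  rw [aliasSum, ← tsum_mul_left]
  refine tsum_congr fun k => ?_
  have hscale : α ^ 2 + 4 * π ^ 2 * (1 / (2 * Δ) + (k.1 : ℝ) / Δ) ^ 2
      + 4 * π ^ 2 * ((0 : ℝ) + (k.2 : ℝ) / Δ) ^ 2
      = π ^ 2 / Δ ^ 2 * (aliasNormSq k + α ^ 2 * Δ ^ 2 / π ^ 2) := by
    unfold aliasNormSq
    field_simp
    ring
  have := aliasNormSq_pos k
  rw [hscale]
  field_simp

end SpdeNyquist

open SpdeNyquist in
theorem spde_over_matern_nyquist_ratio_d2 (α : ℝ) (hα : 0 < α) :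
    Tendsto
      (fun Δ : ℝ =>
        (4 * π * α ^ 2 * Δ ^ 4 / (4 + α ^ 2 * Δ ^ 2) ^ 2) /
          (4 * π * α ^ 2 * ∑' k : ℤ × ℤ,
            1 / (α ^ 2 + 4 * π ^ 2 * (1 / (2 * Δ) + (k.1 : ℝ) / Δ) ^ 2
                + 4 * π ^ 2 * ((0 : ℝ) + (k.2 : ℝ) / Δ) ^ 2) ^ 2))
      (nhdsWithin 0 (Set.Ioi 0)) (nhds (π ^ 4 / (16 * S1))) := by
  have hε : Tendsto (fun Δ : ℝ => α ^ 2 * Δ ^ 2 / π ^ 2) (𝓝[>] 0) (𝓝[≥] 0) := by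
    refine tendsto_nhdsWithin_iff.2
      ⟨?_, Eventually.of_forall fun Δ => Set.mem_Ici.2 (by positivity)⟩
    have hcont : Continuous fun Δ : ℝ => α ^ 2 * Δ ^ 2 / π ^ 2 := by fun_prop
    simpa using hcont.continuousAt.tendsto.mono_left (nhdsWithin_le_nhds (a := (0 : ℝ)))
  have hG : Tendsto (fun Δ : ℝ => aliasSum (α ^ 2 * Δ ^ 2 / π ^ 2)) (𝓝[>] 0) (𝓝 S1) :=
    (tendsto_tsum_one_div_add_sq aliasNormSq_pos summable_one_div_aliasNormSq_sq).comp hε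
  have hpoly : Tendsto (fun Δ : ℝ => (4 + α ^ 2 * Δ ^ 2) ^ 2) (𝓝[>] 0) (𝓝 16) := by
    have hcont : Continuous fun Δ : ℝ => (4 + α ^ 2 * Δ ^ 2) ^ 2 := by fun_prop
    convert hcont.continuousAt.tendsto.mono_left (nhdsWithin_le_nhds (a := (0 : ℝ))) using 2
    norm_num
  have hlim : Tendsto
      (fun Δ : ℝ => π ^ 4 / ((4 + α ^ 2 * Δ ^ 2) ^ 2 * aliasSum (α ^ 2 * Δ ^ 2 / π ^ 2)))
      (𝓝[>] 0) (𝓝 (π ^ 4 / (16 * S1))) :=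
    tendsto_const_nhds.div (hpoly.mul hG) (by have := S1_pos; positivity)
  refine hlim.congr' ?_
  filter_upwards [self_mem_nhdsWithin, hG.eventually_ne S1_pos.ne'] with Δ (hΔ : 0 < Δ) hGΔ
  rw [tsum_aliased_matern_nyquist α hΔ.ne']
  field_simp
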